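/- arXiv:1606.08293 — 2 statements merged into one kernel-verified Lean document; each statement's English description precedes it below -/
import Mathlib

section
/- For all natural numbers n ≥ 9, ln( (n·ln n)/ln(n·ln n) − 2 ) > ln( (ln(n·ln n))^2 − 2·ln((n+1)·ln(n+1)) − 2 ). -/
/-!
Write `L = log (n log n)` and `M = log ((n+1) log (n+1))`, so that `n log n = exp L`. For `n ≥ 9`
we have `13/5 ≤ L < M < L + 1`, hence `L² - 2M - 2` lies strictly between `L² - 2L - 4` and
`L² - 2L - 2`. As `log b = log |b|` and `log 0 = 0`, it suffices that
`|L² - 2M - 2| < exp L / L - 2` and `1 < exp L / L - 2`; multiplied by `L` these are the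
polynomial bounds `t³ - 2t² < exp t`, `2t² + 6t - t³ < exp t` and `3t < exp t`, each a
consequence of a truncated Taylor series of `exp`.
-/

open Real

namespace Real

lemma log_lt_log_of_abs_lt {a b : ℝ} (ha : 1 < a) (hb : |b| < a) : log b < log a := by
  rcases eq_or_ne b 0 with rfl | hb0
  · simpa using log_pos ha
  · rw [← log_abs b]
    exact log_lt_log (abs_pos.mpr hb0) hb

lemma cube_sub_two_mul_sq_lt_exp {t : ℝ} (ht : 0 ≤ t) : t ^ 3 - 2 * t ^ 2 < exp t := by
  have h := sum_le_exp_of_nonneg ht 7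
  simp only [Finset.sum_range_succ, Finset.sum_range_zero, Nat.factorial] at h
  norm_num at h
  nlinarith [sq_nonneg (t ^ 2 - 8 * t), sq_nonneg (t ^ 2 - 7 * t), sq_nonneg (t ^ 3 - 20 * t),
    sq_nonneg (t - 4), mul_nonneg (mul_nonneg ht ht) ht, sq_nonneg (t ^ 2 - 9 * t)]

lemma two_mul_sq_add_six_mul_sub_cube_lt_exp {t : ℝ} (ht : 13 / 5 ≤ t) :
    2 * t ^ 2 + 6 * t - t ^ 3 < exp t := by
  have h := sum_le_exp_of_nonneg (by linarith : 0 ≤ t) 5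
  simp only [Finset.sum_range_succ, Finset.sum_range_zero, Nat.factorial] at h
  norm_num at h
  nlinarith [mul_nonneg (sub_nonneg.2 ht) (sub_nonneg.2 ht)]

lemma three_mul_lt_exp {t : ℝ} (ht : 13 / 5 ≤ t) : 3 * t < exp t := by
  have h := sum_le_exp_of_nonneg (by linarith : 0 ≤ t) 4
  simp only [Finset.sum_range_succ, Finset.sum_range_zero, Nat.factorial] at h
  norm_num at h
  nlinarith [mul_nonneg (sub_nonneg.2 ht) (sub_nonneg.2 ht)]

lemma log_sq_sub_lt_log_exp_div_sub {L M : ℝ} (hL : 13 / 5 ≤ L) (hLM : L < M) (hML : M < L + 1) :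
    log (L ^ 2 - 2 * M - 2) < log (exp L / L - 2) := by
  have hL0 : 0 < L := by linarith
  apply log_lt_log_of_abs_lt
  · rw [lt_sub_iff_add_lt, lt_div_iff₀ hL0]
    linarith [three_mul_lt_exp hL]
  · have hupper : L ^ 2 - 2 * L < exp L / L := by
      rw [lt_div_iff₀ hL0]
      nlinarith [cube_sub_two_mul_sq_lt_exp hL0.le]
    have hlower : 2 * L + 6 - L ^ 2 < exp L / L := by
      rw [lt_div_iff₀ hL0]
      nlinarith [two_mul_sq_add_six_mul_sub_cube_lt_exp hL]
    rw [abs_lt]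
    constructor <;> linarith

section
variable {y : ℝ}

lemma two_le_log_of_nine_le (hy : 9 ≤ y) : 2 ≤ log y := by
  rw [le_log_iff_exp_le (by linarith), show (2 : ℝ) = 1 + 1 by norm_num, exp_add]
  nlinarith [exp_one_lt_d9, exp_pos 1]

lemma thirteen_fifths_le_log_mul_log (hy : 9 ≤ y) : 13 / 5 ≤ log (y * log y) := by
  have hlog := two_le_log_of_nine_le hy
  rw [log_mul (by linarith) (by linarith)]
  have : log 2 ≤ log (log y) := log_le_log two_pos hlog
  linarith [log_two_gt_d9]

lemma log_mul_log_lt_log_add_one_mul_log_add_one (hy : 1 < y) :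
    log (y * log y) < log ((y + 1) * log (y + 1)) := by
  have hlog : 0 < log y := log_pos hy
  have hlog_le : log y ≤ log (y + 1) := log_le_log (by linarith) (by linarith)
  exact log_lt_log (by positivity) (by nlinarith)

lemma log_add_one_mul_log_add_one_lt (hy : 9 ≤ y) :
    log ((y + 1) * log (y + 1)) < log (y * log y) + 1 := by
  have hlog := two_le_log_of_nine_le hy
  have hpos : 0 < y * log y := mul_pos (by linarith) (by linarith)
  have hlog_succ : log (y + 1) ≤ 2 * log y := by
    calc log (y + 1) ≤ log (y ^ 2) := log_le_log (by linarith) (by nlinarith)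
      _ = 2 * log y := by rw [log_pow, Nat.cast_ofNat]
  have hprod : (y + 1) * log (y + 1) < exp 1 * (y * log y) :=
    calc (y + 1) * log (y + 1) ≤ (10 / 9 * y) * (2 * log y) :=
          mul_le_mul (by linarith) hlog_succ (log_nonneg (by linarith)) (by linarith)
      _ = 20 / 9 * (y * log y) := by ring
      _ < exp 1 * (y * log y) := mul_lt_mul_of_pos_right (by linarith [exp_one_gt_d9]) hpos
  calc log ((y + 1) * log (y + 1)) < log (exp 1 * (y * log y)) :=
        log_lt_log (mul_pos (by linarith) (log_pos (by linarith))) hprod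
    _ = log (y * log y) + 1 := by rw [log_mul (exp_pos 1).ne' hpos.ne', log_exp, add_comm]

end

end Real

theorem stmt_8 : ∀ n : ℕ, n ≥ 9 →
    Real.log ((n * Real.log n) / Real.log (n * Real.log n) - 2) >
      Real.log ((Real.log (n * Real.log n)) ^ 2
        - 2 * Real.log ((n + 1) * Real.log (n + 1)) - 2) := by
  intro n hn
  have hy : (9 : ℝ) ≤ n := by exact_mod_cast hn
  have hpos : 0 < (n : ℝ) * log n := mul_pos (by linarith) (by linarith [two_le_log_of_nine_le hy])
  have key := log_sq_sub_lt_log_exp_div_sub (thirteen_fifths_le_log_mul_log hy)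
    (log_mul_log_lt_log_add_one_mul_log_add_one (by linarith)) (log_add_one_mul_log_add_one_lt hy)
  rwa [exp_log hpos] at key
end

section
/- For all natural numbers n ≥ 16, ln( (1.2)^n / ln((1.2)^n) − 2 ) > ln( (ln((1.2)^n))^2 − 2·ln((1.2)^{n+1}) − 2 ). -/
/-!
Write `t = n log 1.2`, so that `1.2 ^ n = exp t` and `log (1.2 ^ (n + 1)) = t + log 1.2`.
Both logarithms are compared through their arguments: the right one is positive as soon as
`t ≥ 16 · 0.18`, and it is below `exp t / t - 2` because `exp t` exceeds `t ^ 2 (t - 2)`,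
which already holds for its degree-5 Taylor polynomial.
-/

open Real Finset

theorem sq_mul_sub_two_lt_exp {t : ℝ} (ht : 0 ≤ t) : t ^ 2 * (t - 2) < exp t := by
  have h := sum_le_exp_of_nonneg ht 6
  norm_num [sum_range_succ, Nat.factorial] at h
  nlinarith [mul_nonneg ht (sq_nonneg (t - 5)), sq_nonneg (t - 5)]

theorem log_one_point_two_gt : (0.18 : ℝ) < log 1.2 := by
  rw [lt_log_iff_exp_lt (by norm_num)]
  calc exp 0.18 ≤ ∑ m ∈ range 3, (0.18 : ℝ) ^ m / m.factorial
          + 0.18 ^ 3 * (3 + 1) / (Nat.factorial 3 * 3) :=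
        exp_bound' (by norm_num) (by norm_num) (by norm_num)
    _ < 1.2 := by norm_num [sum_range_succ, Nat.factorial]

theorem log_sq_sub_lt_log_exp_div_sub {t c : ℝ} (ht : 0 < t) (hc : 0 ≤ c)
    (hpos : 0 < t ^ 2 - 2 * (t + c) - 2) :
    log (t ^ 2 - 2 * (t + c) - 2) < log (exp t / t - 2) := by
  refine log_lt_log hpos ?_
  have hexp := sq_mul_sub_two_lt_exp ht.le
  rw [sub_lt_sub_iff_right, lt_div_iff₀ ht]
  nlinarith

theorem stmt_9 : ∀ n : ℕ, n ≥ 16 →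
    Real.log ((1.2 : ℝ) ^ n / Real.log ((1.2 : ℝ) ^ n) - 2) >
      Real.log ((Real.log ((1.2 : ℝ) ^ n)) ^ 2
        - 2 * Real.log ((1.2 : ℝ) ^ (n + 1)) - 2) := by
  intro n hn
  have hL := log_one_point_two_gt
  have hn' : (16 : ℝ) ≤ n := by exact_mod_cast hn
  have hlog : log ((1.2 : ℝ) ^ n) = (n : ℝ) * log 1.2 := log_pow 1.2 n
  have hlog_succ : log ((1.2 : ℝ) ^ (n + 1)) = (n : ℝ) * log 1.2 + log 1.2 := by
    rw [log_pow]; push_cast; ring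
  have hexp : (1.2 : ℝ) ^ n = exp ((n : ℝ) * log 1.2) := by
    rw [← hlog, exp_log (by positivity)]
  rw [hlog, hlog_succ, hexp]
  refine log_sq_sub_lt_log_exp_div_sub (by positivity) (by positivity) ?_
  -- with `t = n log 1.2 ≥ 2.88` and `log 1.2 ≤ t / 16` the quadratic is at least `t ^ 2 - 2.125 t - 2`
  have ht : 2.88 ≤ (n : ℝ) * log 1.2 := by nlinarith
  nlinarith [mul_nonneg (sub_nonneg.2 ht) (by positivity : (0 : ℝ) ≤ (n : ℝ) * log 1.2)]
end
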